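/- For every admissible subgroup L of ℤ × ℤ, the truncated-square torus graph G(L) — the edge graph of the semi-equivelar map of type {4,8,8} on the torus determined by L — is Hamiltonian. -/

import Mathlib

/-- `e₁ = (1,0)` in `ℤ × ℤ`. -/
def e₁ : ℤ × ℤ := (1, 0)

/-- `e₂ = (0,1)` in `ℤ × ℤ`. -/
def e₂ : ℤ × ℤ := (0, 1)

/-- A subgroup `L ≤ ℤ × ℤ` is admissible if it has finite index and contains no nonzero
vector `(v₁, v₂)` with `|v₁| ≤ 2` and `|v₂| ≤ 2`. -/
def Admissible (L : AddSubgroup (ℤ × ℤ)) : Prop :=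
  Finite ((ℤ × ℤ) ⧸ L) ∧ ∀ v ∈ L, v ≠ 0 → ¬(|v.1| ≤ 2 ∧ |v.2| ≤ 2)

/-- A graph is Hamiltonian if it contains a cycle visiting every vertex (exactly once:
a cycle repeats no vertex other than its basepoint). -/
def SimpleGraph.Hamiltonian {α : Type*} (G : SimpleGraph α) : Prop :=
  ∃ (a : α) (p : G.Walk a a), p.IsCycle ∧ ∀ v, v ∈ p.support

/-- The edge relation of the truncated-square graph over an abelian group `A`
(second coordinates are taken mod 4). -/
def truncSquareRel {A : Type*} [AddCommGroup A] (E₁ E₂ : A) :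
    A × Fin 4 → A × Fin 4 → Prop := fun u v =>
  (∃ (x : A) (i : Fin 4), u = (x, i) ∧ v = (x, i + 1)) ∨
  (∃ x : A, u = (x, 0) ∧ v = (x + E₁, 2)) ∨
  (∃ x : A, u = (x, 1) ∧ v = (x + E₂, 3))

/-- The truncated-square graph over an abelian group `A`. -/
def truncSquareGraph {A : Type*} [AddCommGroup A] (E₁ E₂ : A) : SimpleGraph (A × Fin 4) :=
  SimpleGraph.fromRel (truncSquareRel E₁ E₂)

/-- The truncated-square torus graph `G(L)`, the edge graph of the semi-equivelar map of
type `{4,8,8}` on the torus determined by `L`. -/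
def truncSquareTorusGraph (L : AddSubgroup (ℤ × ℤ)) :
    SimpleGraph (((ℤ × ℤ) ⧸ L) × Fin 4) :=
  truncSquareGraph (QuotientAddGroup.mk e₁) (QuotientAddGroup.mk e₂)

/-!
Every vertex of the truncated-square graph lies on one square and one edge between squares, so
taking all edges between squares together with a perfect matching of each square gives a
2-regular spanning subgraph, and a connected one is a Hamiltonian cycle. Matching every square as
`{0–3, 1–2}` gives one staircase cycle per coset (column) of `⟨a + b⟩`: the staircase of the
column `c` runs through the corners `0, 3` of `c` and the corners `1, 2` of `c + a`. Switching the
square `j • a` to `{0–1, 2–3}` for `0 < j < M`, where `M` is the number of columns, splices the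
staircases of the columns `j - 1` and `j` together, and the result is connected.
-/

open SimpleGraph Function

namespace SimpleGraph

variable {V : Type*}

theorem hamiltonian_of_le_of_isCycles_of_connected [Finite V] {F G : SimpleGraph V} (hFG : F ≤ G)
    (hF : F.IsCycles) (hconn : F.Connected) {v : V} (hv : (F.neighborSet v).Nonempty) :
    G.Hamiltonian := by
  obtain ⟨p, hp, hverts⟩ :=
    hF.exists_cycle_toSubgraph_verts_eq_connectedComponentSupp (c := F.connectedComponentMk v)
      rfl hv
  refine ⟨v, p.mapLe hFG, hp.mapLe hFG, fun w => ?_⟩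
  rw [Walk.support_mapLe_eq_support, ← Walk.mem_verts_toSubgraph, hverts,
    ConnectedComponent.mem_supp_iff, ConnectedComponent.eq]
  exact hconn.preconnected w v

def involutionGraph (ε μ : V → V) : SimpleGraph V := fromRel fun v w => w = ε v ∨ w = μ v

variable {ε μ : V → V}

theorem involutionGraph_adj (hε : Involutive ε) (hμ : Involutive μ) {v w : V} :
    (involutionGraph ε μ).Adj v w ↔ v ≠ w ∧ (w = ε v ∨ w = μ v) := by
  rw [involutionGraph, fromRel_adj]
  constructor
  · rintro ⟨hne, (h | h) | h | h⟩
    · exact ⟨hne, Or.inl h⟩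
    · exact ⟨hne, Or.inr h⟩
    · exact ⟨hne, Or.inl (by rw [h, hε])⟩
    · exact ⟨hne, Or.inr (by rw [h, hμ])⟩
  · rintro ⟨hne, h⟩
    exact ⟨hne, Or.inl h⟩

theorem neighborSet_involutionGraph (hε : Involutive ε) (hμ : Involutive μ)
    {v : V} (hεv : ε v ≠ v) (hμv : μ v ≠ v) :
    (involutionGraph ε μ).neighborSet v = {ε v, μ v} := by
  ext w
  rw [mem_neighborSet, involutionGraph_adj hε hμ, Set.mem_insert_iff, Set.mem_singleton_iff]
  constructor
  · exact fun h => h.2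
  · rintro (rfl | rfl)
    exacts [⟨hεv.symm, Or.inl rfl⟩, ⟨hμv.symm, Or.inr rfl⟩]

theorem isCycles_involutionGraph (hε : Involutive ε) (hμ : Involutive μ)
    (hεv : ∀ v, ε v ≠ v) (hμv : ∀ v, μ v ≠ v) (hεμ : ∀ v, ε v ≠ μ v) :
    (involutionGraph ε μ).IsCycles := fun v _ => by
  rw [neighborSet_involutionGraph hε hμ (hεv v) (hμv v), Set.ncard_pair (hεμ v)]

end SimpleGraph

namespace TruncSquare

section TwoFactor

variable {A : Type*}

open scoped Classical in
noncomputable def squareMate (S : Set A) (v : A × Fin 4) : A × Fin 4 :=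
  (v.1, if v.1 ∈ S then ![1, 0, 3, 2] v.2 else ![3, 2, 1, 0] v.2)

theorem squareMate_involutive (S : Set A) : Involutive (squareMate S) := by
  rintro ⟨y, i⟩
  by_cases hy : y ∈ S <;> fin_cases i <;> simp [squareMate, hy]

theorem squareMate_snd_ne (S : Set A) (v : A × Fin 4) :
    (squareMate S v).2 ≠ v.2 ∧ (squareMate S v).2 ≠ v.2 + 2 := by
  obtain ⟨y, i⟩ := v
  by_cases hy : y ∈ S <;> fin_cases i <;> simp [squareMate, hy]

variable [AddCommGroup A] (a b : A)

def bridge (v : A × Fin 4) : A × Fin 4 := (v.1 + ![a, b, -a, -b] v.2, v.2 + 2)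

theorem bridge_involutive : Involutive (bridge a b) := by
  rintro ⟨y, i⟩
  fin_cases i <;> simp [bridge]

theorem bridge_ne (v : A × Fin 4) : bridge a b v ≠ v := fun h => by
  have : v.2 + 2 ≠ v.2 := by generalize v.2 = i; revert i; decide
  exact this (congrArg Prod.snd h)

noncomputable def switchedTwoFactor (S : Set A) : SimpleGraph (A × Fin 4) :=
  involutionGraph (bridge a b) (squareMate S)

theorem isCycles_switchedTwoFactor (S : Set A) : (switchedTwoFactor a b S).IsCycles :=
  isCycles_involutionGraph (bridge_involutive a b) (squareMate_involutive S) (bridge_ne a b)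
    (fun v h => (squareMate_snd_ne S v).1 (congrArg Prod.snd h))
    (fun v h => (squareMate_snd_ne S v).2 (congrArg Prod.snd h).symm)

theorem switchedTwoFactor_le (S : Set A) : switchedTwoFactor a b S ≤ truncSquareGraph a b := by
  rintro v w hvw
  rw [switchedTwoFactor, involutionGraph_adj (bridge_involutive a b)
    (squareMate_involutive S)] at hvw
  obtain ⟨hne, rfl | rfl⟩ := hvw
  all_goals
    refine (fromRel_adj _ _ _).mpr ⟨hne, ?_⟩
    obtain ⟨y, i⟩ := v
  · fin_cases i <;> simp [bridge, truncSquareRel]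
  · by_cases hy : y ∈ S <;> fin_cases i <;> simp [squareMate, hy, truncSquareRel]

end TwoFactor

section Reachability

variable {A : Type*} [AddCommGroup A] {a b : A} {S : Set A}

theorem adj_bridge (v : A × Fin 4) : (switchedTwoFactor a b S).Adj v (bridge a b v) :=
  (involutionGraph_adj (bridge_involutive a b) (squareMate_involutive S)).mpr
    ⟨(bridge_ne a b v).symm, Or.inl rfl⟩

theorem adj_squareMate (v : A × Fin 4) : (switchedTwoFactor a b S).Adj v (squareMate S v) :=
  (involutionGraph_adj (bridge_involutive a b) (squareMate_involutive S)).mpr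
    ⟨fun h => (squareMate_snd_ne S v).1 (congrArg Prod.snd h).symm, Or.inr rfl⟩

theorem reachable_zero_two (y : A) : (switchedTwoFactor a b S).Reachable (y, 0) (y + a, 2) :=
  (adj_bridge (y, 0)).reachable

theorem reachable_one_three (y : A) : (switchedTwoFactor a b S).Reachable (y, 1) (y + b, 3) :=
  (adj_bridge (y, 1)).reachable

theorem reachable_two_zero (y : A) : (switchedTwoFactor a b S).Reachable (y, 2) (y - a, 0) := by
  simpa [bridge, ← sub_eq_add_neg] using (adj_bridge (a := a) (b := b) (S := S) (y, 2)).reachable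

theorem reachable_zero_three {y : A} (hy : y ∉ S) :
    (switchedTwoFactor a b S).Reachable (y, 0) (y, 3) := by
  simpa [squareMate, hy] using (adj_squareMate (a := a) (b := b) (S := S) (y, 0)).reachable

theorem reachable_one_two {y : A} (hy : y ∉ S) :
    (switchedTwoFactor a b S).Reachable (y, 1) (y, 2) := by
  simpa [squareMate, hy] using (adj_squareMate (a := a) (b := b) (S := S) (y, 1)).reachable

theorem reachable_zero_one {y : A} (hy : y ∈ S) :
    (switchedTwoFactor a b S).Reachable (y, 0) (y, 1) := by
  simpa [squareMate, hy] using (adj_squareMate (a := a) (b := b) (S := S) (y, 0)).reachable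

theorem reachable_two_three {y : A} (hy : y ∈ S) :
    (switchedTwoFactor a b S).Reachable (y, 2) (y, 3) := by
  simpa [squareMate, hy] using (adj_squareMate (a := a) (b := b) (S := S) (y, 2)).reachable

theorem reachable_stair {y : A} (hy : y - b ∉ S) :
    (switchedTwoFactor a b S).Reachable (y - (a + b), 0) (y, 3) := by
  have h₁ := reachable_zero_two (a := a) (b := b) (S := S) (y - (a + b))
  have h₂ := reachable_one_three (a := a) (b := b) (S := S) (y - b)
  rw [show y - (a + b) + a = y - b by abel] at h₁
  rw [sub_add_cancel] at h₂
  exact (h₁.trans (reachable_one_two hy).symm).trans h₂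

end Reachability

section Columns

open AddSubgroup

variable {A : Type*} [AddCommGroup A] (a b : A)

noncomputable def numColumns : ℕ := addOrderOf (QuotientAddGroup.mk a : A ⧸ zmultiples (a + b))

def switchedSquares : Set A := {y | ∃ j, 0 < j ∧ j < numColumns a b ∧ y = j • a}

variable {a b}

theorem numColumns_pos [Finite A] : 0 < numColumns a b := addOrderOf_pos _

theorem numColumns_nsmul_mem : numColumns a b • a ∈ zmultiples (a + b) := by
  rw [← QuotientAddGroup.eq_zero_iff, QuotientAddGroup.mk_nsmul]
  exact addOrderOf_nsmul_eq_zero _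

theorem nsmul_add_mem_switchedSquares_iff {c : ℕ} (hc : c < numColumns a b) {n : A}
    (hn : n ∈ zmultiples (a + b)) : c • a + n ∈ switchedSquares a b ↔ c ≠ 0 ∧ n = 0 := by
  constructor
  · rintro ⟨j, hj, hjM, h⟩
    have hcj : c = j := nsmul_injOn_Iio_addOrderOf hc hjM (by
      simpa [(QuotientAddGroup.eq_zero_iff n).mpr hn] using
        congrArg (QuotientAddGroup.mk (s := zmultiples (a + b))) h)
    subst hcj
    exact ⟨hj.ne', by simpa using h⟩
  · rintro ⟨hc0, rfl⟩
    exact ⟨c, Nat.pos_of_ne_zero hc0, hc, add_zero _⟩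

theorem zero_notMem_switchedSquares [Finite A] : (0 : A) ∉ switchedSquares a b := by
  simpa using (nsmul_add_mem_switchedSquares_iff numColumns_pos (zero_mem (zmultiples (a + b)))).not

theorem nsmul_sub_notMem_switchedSquares [Finite A] {c : ℕ} (hc : c ≤ numColumns a b) {n : A}
    (hn : n ∈ zmultiples (a + b)) (hn0 : n ≠ 0) : c • a - n ∉ switchedSquares a b := by
  rcases hc.lt_or_eq with hc | rfl
  · rw [sub_eq_add_neg, nsmul_add_mem_switchedSquares_iff hc (neg_mem hn)]
    simp [hn0]
  · simpa using
      (nsmul_add_mem_switchedSquares_iff numColumns_pos (sub_mem numColumns_nsmul_mem hn)).not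

end Columns

section Connectivity

open AddSubgroup

variable {A : Type*} [AddCommGroup A] {a b : A}

local notation "𝓒" => switchedTwoFactor a b (switchedSquares a b)

theorem reachable_next_column {T : A × Fin 4} {c : ℕ} (hc : c + 1 < numColumns a b)
    (hcol : ∀ n ∈ zmultiples (a + b), Reachable 𝓒 T (c • a - n, 0) ∧ Reachable 𝓒 T (c • a - n, 3)) :
    Reachable 𝓒 T ((c + 1) • a, 0) ∧ Reachable 𝓒 T ((c + 1) • a, 3) := by
  have hm : (c + 1) • a ∈ switchedSquares a b := ⟨c + 1, c.succ_pos, hc, rfl⟩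
  have h₀ := (reachable_zero_one hm).trans (reachable_one_three (a := a) (b := b) ((c + 1) • a))
  have h₃ :=
    (reachable_two_three hm).symm.trans (reachable_two_zero (a := a) (b := b) ((c + 1) • a))
  rw [show (c + 1) • a + b = c • a - -(a + b) by rw [succ_nsmul]; abel] at h₀
  rw [show (c + 1) • a - a = c • a - 0 by rw [succ_nsmul]; abel] at h₃
  exact ⟨(hcol _ (neg_mem (mem_zmultiples _))).2.trans h₀.symm,
    (hcol 0 (zero_mem _)).1.trans h₃.symm⟩

variable [Finite A]

theorem reachable_column {T : A × Fin 4} {c : ℕ} (hc : c < numColumns a b)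
    (h₀ : Reachable 𝓒 T (c • a, 0)) (h₃ : Reachable 𝓒 T (c • a, 3))
    {n : A} (hn : n ∈ zmultiples (a + b)) :
    Reachable 𝓒 T (c • a - n, 0) ∧ Reachable 𝓒 T (c • a - n, 3) := by
  have hmem (i : ℕ) : i • (a + b) ∈ zmultiples (a + b) := nsmul_mem (mem_zmultiples _) i
  -- Walk down the staircase of column `c` from `(c • a, 3)`: the squares it passes through are
  -- all unswitched until it returns to `c • a`.
  have stairs (i : ℕ) : Reachable 𝓒 T (c • a - i • (a + b), 3) := by
    induction i with
    | zero => simpa using h₃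
    | succ i ih =>
      by_cases hi : (i + 1) • (a + b) = 0
      · rwa [hi, sub_zero]
      have hnext : c • a - i • (a + b) - b ∉ switchedSquares a b := by
        rw [show c • a - i • (a + b) - b = (c + 1) • a - (i + 1) • (a + b) by
          simp only [succ_nsmul]; abel]
        exact nsmul_sub_notMem_switchedSquares hc (hmem _) hi
      have hstair := reachable_stair (a := a) hnext
      rw [show c • a - i • (a + b) - (a + b) = c • a - (i + 1) • (a + b) by
        rw [succ_nsmul]; abel] at hstair
      exact (ih.trans hstair.symm).trans
        (reachable_zero_three (nsmul_sub_notMem_switchedSquares hc.le (hmem _) hi))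
  obtain ⟨i, rfl⟩ :=
    (AddSubmonoid.mem_multiples_iff _ _).mp (mem_multiples_iff_mem_zmultiples.mpr hn)
  refine ⟨?_, stairs i⟩
  by_cases hi : i • (a + b) = 0
  · rwa [hi, sub_zero]
  · exact (stairs i).trans
      (reachable_zero_three (nsmul_sub_notMem_switchedSquares hc.le (hmem i) hi)).symm

theorem reachable_of_lt_numColumns {c : ℕ} (hc : c < numColumns a b) {n : A}
    (hn : n ∈ zmultiples (a + b)) :
    Reachable 𝓒 (0, 0) (c • a - n, 0) ∧ Reachable 𝓒 (0, 0) (c • a - n, 3) := by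
  induction c generalizing n with
  | zero =>
    refine reachable_column hc (by simp) ?_ hn
    simpa using reachable_zero_three (a := a) (b := b) zero_notMem_switchedSquares
  | succ c ih =>
    obtain ⟨h₀, h₃⟩ := reachable_next_column hc fun n hn => ih (by omega) hn
    exact reachable_column hc h₀ h₃ hn

theorem exists_nsmul_sub_mem_zmultiples (hgen : closure {a, b} = ⊤) (y : A) :
    ∃ c < numColumns a b, c • a - y ∈ zmultiples (a + b) := by
  classical
  let π := QuotientAddGroup.mk' (zmultiples (a + b))
  have hπb : π b = -π a := eq_neg_of_add_eq_zero_left <| by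
    rw [← map_add, add_comm b a, QuotientAddGroup.mk'_apply, QuotientAddGroup.eq_zero_iff]
    exact mem_zmultiples _
  have hcl : closure {a, b} ≤ (zmultiples (π a)).comap π := by
    rw [closure_le, Set.insert_subset_iff, Set.singleton_subset_iff]
    refine ⟨mem_zmultiples _, ?_⟩
    show π b ∈ zmultiples (π a)
    rw [hπb]
    exact neg_mem (mem_zmultiples _)
  have hy : π y ∈ zmultiples (π a) := hcl (hgen ▸ mem_top y)
  obtain ⟨c, hc, hcy⟩ := Finset.mem_image.mp (mem_zmultiples_iff_mem_range_addOrderOf.mp hy)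
  refine ⟨c, Finset.mem_range.mp hc, ?_⟩
  rw [← QuotientAddGroup.eq_zero_iff, QuotientAddGroup.mk_sub, QuotientAddGroup.mk_nsmul]
  exact sub_eq_zero.mpr hcy

theorem connected_switchedTwoFactor (hgen : closure {a, b} = ⊤) :
    (switchedTwoFactor a b (switchedSquares a b)).Connected := by
  have h₀₃ (y : A) : Reachable 𝓒 (0, 0) (y, 0) ∧ Reachable 𝓒 (0, 0) (y, 3) := by
    obtain ⟨c, hc, hn⟩ := exists_nsmul_sub_mem_zmultiples hgen y
    simpa using reachable_of_lt_numColumns hc hn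
  have h₂ (y : A) : Reachable 𝓒 (0, 0) (y, 2) := by
    have h := reachable_zero_two (a := a) (b := b) (S := switchedSquares a b) (y - a)
    rw [sub_add_cancel] at h
    exact (h₀₃ (y - a)).1.trans h
  refine (connected_iff_exists_forall_reachable _).mpr ⟨(0, 0), ?_⟩
  rintro ⟨y, i⟩
  fin_cases i
  · exact (h₀₃ y).1
  · by_cases hm : y ∈ switchedSquares a b
    · exact (h₀₃ y).1.trans (reachable_zero_one hm)
    · exact (h₂ y).trans (reachable_one_two hm).symm
  · exact h₂ y
  · exact (h₀₃ y).2

end Connectivity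

end TruncSquare

open TruncSquare in
theorem truncSquareGraph_hamiltonian {A : Type*} [AddCommGroup A] [Finite A] {a b : A}
    (hgen : AddSubgroup.closure {a, b} = ⊤) : (truncSquareGraph a b).Hamiltonian :=
  hamiltonian_of_le_of_isCycles_of_connected (switchedTwoFactor_le a b _)
    (isCycles_switchedTwoFactor a b _) (connected_switchedTwoFactor hgen)
    ⟨_, adj_bridge (a := a) (b := b) ((0 : A), (0 : Fin 4))⟩

theorem closure_mk_e₁_e₂ (L : AddSubgroup (ℤ × ℤ)) :
    AddSubgroup.closure {(QuotientAddGroup.mk e₁ : (ℤ × ℤ) ⧸ L), QuotientAddGroup.mk e₂} = ⊤ := by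
  refine eq_top_iff.mpr fun x _ => ?_
  induction x using QuotientAddGroup.induction_on with
  | H z =>
    have hz : z = z.1 • e₁ + z.2 • e₂ := by ext <;> simp [e₁, e₂]
    rw [hz, QuotientAddGroup.mk_add, QuotientAddGroup.mk_zsmul, QuotientAddGroup.mk_zsmul]
    exact add_mem (zsmul_mem (AddSubgroup.subset_closure (by simp)) _)
      (zsmul_mem (AddSubgroup.subset_closure (by simp)) _)

/-- Every truncated-square torus graph (type `{4,8,8}`) is Hamiltonian. -/
theorem truncSquareTorusGraph_hamiltonian (L : AddSubgroup (ℤ × ℤ)) (hL : Admissible L) :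
    (truncSquareTorusGraph L).Hamiltonian :=
  have := hL.1
  truncSquareGraph_hamiltonian (closure_mk_e₁_e₂ L)
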